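/- Let m, L, d_1, d_2, w_s, q be positive integers with w_s ≤ L. If q ≤ H(L,d_1,w_s), then S(m,L,d_1·d_2,w_s) ≥ A_q(m,d_2). Concretely, given an (L,d_1)-heavy-weight code 𝒟 of weight parameter w_s with |𝒟| ≥ q and a code of length m over a q-symbol alphabet with pairwise Hamming distance at least d_2, replacing each symbol of each codeword by a distinct element of 𝒟 yields an (m,L,d_1 d_2,w_s)-SECC of the same size. -/

import Mathlib

open Finset Filter

/-- Weight (number of ones) of a binary word. -/
def wt {n : ℕ} (x : Fin n → Bool) : ℕ := (Finset.univ.filter fun i => x i = true).card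

/-- The index (in a word of length `m * L`) of position `j` of subblock `i`. -/
def subIdx (m L : ℕ) (i : Fin m) (j : Fin L) : Fin (m * L) :=
  ⟨i.val * L + j.val, by
    have hj : j.val < L := j.isLt
    have hi : i.val + 1 ≤ m := i.isLt
    calc i.val * L + j.val < i.val * L + L := Nat.add_lt_add_left hj _
      _ = (i.val + 1) * L := by ring
      _ ≤ m * L := Nat.mul_le_mul hi (Nat.le_refl L)⟩

/-- The `i`-th subblock (of length `L`) of a binary word of length `m * L`. -/
def subblock (m L : ℕ) (x : Fin (m * L) → Bool) (i : Fin m) : Fin L → Bool :=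
  fun j => x (subIdx m L i j)

/-- The CSCC space: binary words of length `m * L` each of whose `m` subblocks of
length `L` has weight exactly `w`. -/
def CSCCspace (m L w : ℕ) : Set (Fin (m * L) → Bool) :=
  {x | ∀ i : Fin m, wt (subblock m L x i) = w}

/-- The SECC space: binary words of length `m * L` each of whose `m` subblocks of
length `L` has weight at least `w`. -/
def SECCspace (m L w : ℕ) : Set (Fin (m * L) → Bool) :=
  {x | ∀ i : Fin m, w ≤ wt (subblock m L x i)}

/-- A code with minimum distance `d` inside the space `Sp`. -/
def isCode {n : ℕ} (Sp : Set (Fin n → Bool)) (d : ℕ) (C : Finset (Fin n → Bool)) : Prop :=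
  (↑C : Set (Fin n → Bool)) ⊆ Sp ∧ ∀ x ∈ C, ∀ y ∈ C, x ≠ y → d ≤ hammingDist x y

/-- The ball of radius `t` around `x`, taken inside the space `Sp`. -/
def ball {n : ℕ} (Sp : Set (Fin n → Bool)) (x : Fin n → Bool) (t : ℕ) :
    Set (Fin n → Bool) :=
  {y | y ∈ Sp ∧ hammingDist x y ≤ t}

/-- `C(m,L,d,w)`: the maximum size of an `(m,L,d,w)`-CSCC. -/
noncomputable def maxCSCC (m L d w : ℕ) : ℕ :=
  sSup {k | ∃ C : Finset (Fin (m * L) → Bool), isCode (CSCCspace m L w) d C ∧ C.card = k}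

/-- `S(m,L,d,w)`: the maximum size of an `(m,L,d,w)`-SECC. -/
noncomputable def maxSECC (m L d w : ℕ) : ℕ :=
  sSup {k | ∃ C : Finset (Fin (m * L) → Bool), isCode (SECCspace m L w) d C ∧ C.card = k}

/-- `A(n,d,w)`: the maximum size of a constant weight code. -/
noncomputable def maxCWC (n d w : ℕ) : ℕ :=
  sSup {k | ∃ C : Finset (Fin n → Bool), isCode {x | wt x = w} d C ∧ C.card = k}

/-- `H(n,d,w)`: the maximum size of a heavy weight code. -/
noncomputable def maxHWC (n d w : ℕ) : ℕ :=
  sSup {k | ∃ C : Finset (Fin n → Bool), isCode {x | w ≤ wt x} d C ∧ C.card = k}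

/-- `A(n,d)`: the maximum size of a binary code of length `n` and distance `d`. -/
noncomputable def maxBinary (n d : ℕ) : ℕ :=
  sSup {k | ∃ C : Finset (Fin n → Bool),
    (∀ x ∈ C, ∀ y ∈ C, x ≠ y → d ≤ hammingDist x y) ∧ C.card = k}

/-- `A_q(n,d)`: the maximum size of a `q`-ary code of length `n` and distance `d`. -/
noncomputable def maxQary (q n d : ℕ) : ℕ :=
  sSup {k | ∃ C : Finset (Fin n → Fin q),
    (∀ x ∈ C, ∀ y ∈ C, x ≠ y → d ≤ hammingDist x y) ∧ C.card = k}

/-- The size of a radius-`r` CSCC ball: the sum over all tuples `(u_1, …, u_m)` with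
`0 ≤ u_i ≤ min{w, L-w}` and `2(u_1 + ⋯ + u_m) ≤ r` of `∏ i, C(w,u_i)·C(L-w,u_i)`. -/
def csccBallSize (m L w r : ℕ) : ℕ :=
  ∑ u ∈ (Finset.univ : Finset (Fin m → Fin (min w (L - w) + 1))).filter
      (fun u => 2 * (∑ i, (u i : ℕ)) ≤ r),
    ∏ i, (w.choose (u i : ℕ)) * ((L - w).choose (u i : ℕ))

/-- The binary entropy function (base-2 logarithms, `h 0 = h 1 = 0`). -/
noncomputable def binent (p : ℝ) : ℝ :=
  -(p * Real.logb 2 p) - (1 - p) * Real.logb 2 (1 - p)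

/-- The asymptotic CSCC rate `γ(L,δ,w/L)`. -/
noncomputable def gammaRate (L : ℕ) (δ : ℝ) (w : ℕ) : ℝ :=
  Filter.limsup (fun m : ℕ =>
    Real.logb 2 (maxCSCC m L ⌊(m : ℝ) * L * δ⌋₊ w) / ((m : ℝ) * L)) Filter.atTop

/-- The asymptotic SECC rate `σ(L,δ,w/L)`. -/
noncomputable def sigmaRate (L : ℕ) (δ : ℝ) (w : ℕ) : ℝ :=
  Filter.limsup (fun m : ℕ =>
    Real.logb 2 (maxSECC m L ⌊(m : ℝ) * L * δ⌋₊ w) / ((m : ℝ) * L)) Filter.atTop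

/-! Concatenation: realise the `q` outer symbols as `q` distinct words of a heavy-weight code
`D` of maximum size. Every subblock of a concatenated word is then a word of `D`, hence of weight
at least `w`, and two outer words that differ in at least `d₂` symbols give concatenated words
whose corresponding subblocks differ, in each of those positions, in at least `d₁` bits. -/

section Concatenation

variable {α : Type*} {m L : ℕ}

def concatWord (f : α → Fin L → Bool) (x : Fin m → α) : Fin (m * L) → Bool :=
  fun k => f (x (finProdFinEquiv.symm k).1) (finProdFinEquiv.symm k).2

theorem subIdx_eq_finProdFinEquiv (i : Fin m) (j : Fin L) :
    subIdx m L i j = finProdFinEquiv (i, j) := by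
  ext
  simp only [subIdx, finProdFinEquiv_apply_val]
  ring

theorem subblock_concatWord (f : α → Fin L → Bool) (x : Fin m → α) (i : Fin m) :
    subblock m L (concatWord f x) i = f (x i) := by
  funext j
  simp only [subblock, concatWord, subIdx_eq_finProdFinEquiv, Equiv.symm_apply_apply]

theorem concatWord_injective {f : α → Fin L → Bool} (hf : Function.Injective f) :
    Function.Injective (concatWord (m := m) f) := fun x y hxy =>
  funext fun i => hf <| by rw [← subblock_concatWord f x i, ← subblock_concatWord f y i, hxy]

theorem hammingDist_concatWord (f : α → Fin L → Bool) (x y : Fin m → α) :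
    hammingDist (concatWord f x) (concatWord f y) = ∑ i, hammingDist (f (x i)) (f (y i)) := by
  classical
  simp only [hammingDist, Finset.card_filter]
  rw [← finProdFinEquiv.sum_comp, Fintype.sum_prod_type]
  simp only [concatWord, Equiv.symm_apply_apply]

theorem mul_hammingDist_le_hammingDist_concatWord [DecidableEq α] {d : ℕ}
    {f : α → Fin L → Bool} (hf : Pairwise fun a b => d ≤ hammingDist (f a) (f b))
    (x y : Fin m → α) :
    d * hammingDist x y ≤ hammingDist (concatWord f x) (concatWord f y) := by
  rw [hammingDist_concatWord, hammingDist, Finset.card_filter, Finset.mul_sum]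
  refine Finset.sum_le_sum fun i _ => ?_
  split_ifs with h
  · simpa using hf h
  · simp

theorem isCode_image_concatWord [DecidableEq α] {d₁ d₂ w : ℕ}
    {f : α → Fin L → Bool} (hwt : ∀ a, w ≤ wt (f a))
    (hdist : Pairwise fun a b => d₁ ≤ hammingDist (f a) (f b)) {C : Finset (Fin m → α)}
    (hC : ∀ x ∈ C, ∀ y ∈ C, x ≠ y → d₂ ≤ hammingDist x y) :
    isCode (SECCspace m L w) (d₁ * d₂) (C.image (concatWord f)) := by
  constructor
  · intro z hz i
    obtain ⟨x, -, rfl⟩ := Finset.mem_image.1 hz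
    rw [subblock_concatWord]
    exact hwt _
  · simp only [Finset.mem_image]
    rintro _ ⟨x, hx, rfl⟩ _ ⟨y, hy, rfl⟩ hxy
    calc d₁ * d₂ ≤ d₁ * hammingDist x y :=
          Nat.mul_le_mul_left _ (hC x hx y hy fun h => hxy (h ▸ rfl))
      _ ≤ _ := mul_hammingDist_le_hammingDist_concatWord hdist x y

end Concatenation

theorem bddAbove_card_setOf {β : Type*} [Fintype β] (P : Finset β → Prop) :
    BddAbove {k | ∃ C : Finset β, P C ∧ C.card = k} := by
  refine ⟨Fintype.card β, ?_⟩
  rintro k ⟨C, -, rfl⟩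
  exact C.card_le_univ

theorem exists_isCode_card_eq_maxHWC (n d w : ℕ) :
    ∃ D : Finset (Fin n → Bool), isCode {x | w ≤ wt x} d D ∧ D.card = maxHWC n d w :=
  Nat.sSup_mem (s := {k | ∃ D : Finset (Fin n → Bool), isCode {x | w ≤ wt x} d D ∧ D.card = k})
    ⟨0, ∅, ⟨by simp, by simp⟩, rfl⟩ (bddAbove_card_setOf _)

theorem card_le_maxSECC {m L d w : ℕ} {C : Finset (Fin (m * L) → Bool)}
    (hC : isCode (SECCspace m L w) d C) : C.card ≤ maxSECC m L d w :=
  le_csSup (bddAbove_card_setOf _) ⟨C, hC, rfl⟩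

theorem maxQary_le {q n d k : ℕ}
    (h : ∀ C : Finset (Fin n → Fin q),
      (∀ x ∈ C, ∀ y ∈ C, x ≠ y → d ≤ hammingDist x y) → C.card ≤ k) :
    maxQary q n d ≤ k :=
  csSup_le ⟨0, ∅, by simp, rfl⟩ <| by rintro _ ⟨C, hC, rfl⟩; exact h C hC

theorem stmt_4_general (m L d1 d2 w q : ℕ) (h : q ≤ maxHWC L d1 w) :
    maxQary q m d2 ≤ maxSECC m L (d1 * d2) w := by
  classical
  obtain ⟨D, hD, hDcard⟩ := exists_isCode_card_eq_maxHWC L d1 w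
  obtain ⟨e⟩ : Nonempty (Fin q ↪ D) :=
    Function.Embedding.nonempty_of_card_le (by simpa [hDcard] using h)
  set f : Fin q → Fin L → Bool := fun a => e a
  have hf : Function.Injective f := Subtype.val_injective.comp e.injective
  refine maxQary_le fun C hC => ?_
  calc C.card = (C.image (concatWord f)).card :=
        (C.card_image_of_injective (concatWord_injective hf)).symm
    _ ≤ _ := card_le_maxSECC <| isCode_image_concatWord (fun a => hD.1 (e a).2)
        (fun a b hab => hD.2 _ (e a).2 _ (e b).2 (hf.ne hab)) hC

/-- Concatenation bound: if `q ≤ H(L,d₁,w)` then `S(m,L,d₁·d₂,w) ≥ A_q(m,d₂)`. -/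
theorem stmt_4 (m L d1 d2 w q : ℕ) (hm : 0 < m) (hL : 0 < L) (hd1 : 0 < d1)
    (hd2 : 0 < d2) (hq : 0 < q) (hw : w ≤ L) (h : q ≤ maxHWC L d1 w) :
    maxQary q m d2 ≤ maxSECC m L (d1 * d2) w :=
  stmt_4_general m L d1 d2 w q h
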